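/- Let θ₂^∞, θ₃^∞ ∈ ℂ with θ₂^∞+θ₃^∞ = 0. Let I ⊆ ℝ be an open interval and let q₁,q₂,p₁,p₂,u : I → ℂ be differentiable with u(t) ≠ 0. Define Q(t) = [[q₁, u],[−q₂/u, q₁]], P(t) = [[p₁/2, −p₂u],[(p₂q₂−θ₂^∞)/u, p₁/2]]. Define A₀ = [[O, I],[O, O]], A₁(t) = [[O, Q],[I, O]], A₂(t) = [[−P, Q²+t],[−Q, P]], B₁(t) = [[O, 2Q],[I, O]], and A(x,t) = A₀x² + A₁x + A₂, B(x,t) = A₀x + B₁. Then the zero-curvature equation ∂A/∂t − ∂B/∂x + [A, B] = O holds for all t ∈ I and all x ∈ ℂ if and only if Q′ = 2P and P′ = 3Q² + t hold on I. -/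

import Mathlib

/-!
Both sides of the zero-curvature equation are computed block by block. With
`∂B/∂x = A₀`, the right-hand side `A₀ − [A, B]` is
`[[−(3Q² + t), 1 + 2xP + 2(PQ + QP)], [−2P, 3Q² + t]]`, while the product rule gives
`∂A/∂t = x [[O, Q′], [O, O]] + [[−P′, Q′Q + QQ′ + 1], [−Q′, P′]]`.
The lower blocks are exactly `Q′ = 2P` and `P′ = 3Q² + t`, and these make the upper blocks
agree for every `x`. The entries of `Q` and `P` are differentiable because `u ≠ 0`.
-/
open Matrix

noncomputable section

/-- Entrywise derivative of a matrix-valued function of a real variable. -/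
def matDeriv {m n : Type*} (F : ℝ → Matrix m n ℂ) (t : ℝ) : Matrix m n ℂ :=
  Matrix.of fun i j => deriv (fun s => F s i j) t

/-- `Q = [[q₁, u],[−q₂/u, q₁]]`. -/
def Qf (q1 q2 u : ℝ → ℂ) (t : ℝ) : Matrix (Fin 2) (Fin 2) ℂ :=
  !![q1 t, u t; -(q2 t)/(u t), q1 t]

/-- `P = [[p₁/2, −p₂u],[(p₂q₂−θ)/u, p₁/2]]`. -/
def Pf (p1 p2 q2 : ℝ → ℂ) (θ : ℂ) (u : ℝ → ℂ) (t : ℝ) : Matrix (Fin 2) (Fin 2) ℂ :=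
  !![p1 t/2, -(p2 t)*(u t); ((p2 t)*(q2 t) - θ)/(u t), p1 t/2]

/-- `A₀ = [[O, I],[O, O]]`. -/
def A0c : Matrix (Fin 2 ⊕ Fin 2) (Fin 2 ⊕ Fin 2) ℂ := fromBlocks 0 1 0 0

/-- `A₁(t) = [[O, Q],[I, O]]`. -/
def A1f (Q : Matrix (Fin 2) (Fin 2) ℂ) : Matrix (Fin 2 ⊕ Fin 2) (Fin 2 ⊕ Fin 2) ℂ :=
  fromBlocks 0 Q 1 0

/-- `A₂(t) = [[−P, Q²+t],[−Q, P]]`. -/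
def A2f (Q P : Matrix (Fin 2) (Fin 2) ℂ) (t : ℂ) : Matrix (Fin 2 ⊕ Fin 2) (Fin 2 ⊕ Fin 2) ℂ :=
  fromBlocks (-P) (Q * Q + t • (1 : Matrix (Fin 2) (Fin 2) ℂ)) (-Q) P

/-- `B₁(t) = [[O, 2Q],[I, O]]`. -/
def B1f (Q : Matrix (Fin 2) (Fin 2) ℂ) : Matrix (Fin 2 ⊕ Fin 2) (Fin 2 ⊕ Fin 2) ℂ :=
  fromBlocks 0 ((2:ℂ) • Q) 1 0

/-- `A(x,t) = A₀x² + A₁x + A₂`. -/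
def Afun (Q P : ℝ → Matrix (Fin 2) (Fin 2) ℂ) (x : ℂ) (t : ℝ) :
    Matrix (Fin 2 ⊕ Fin 2) (Fin 2 ⊕ Fin 2) ℂ :=
  (x ^ 2) • A0c + x • A1f (Q t) + A2f (Q t) (P t) (t : ℂ)

/-- `B(x,t) = A₀x + B₁`. -/
def Bfun (Q : ℝ → Matrix (Fin 2) (Fin 2) ℂ) (x : ℂ) (t : ℝ) :
    Matrix (Fin 2 ⊕ Fin 2) (Fin 2 ⊕ Fin 2) ℂ :=
  x • A0c + B1f (Q t)

def HasMatDerivAt {m n : Type*} (F : ℝ → Matrix m n ℂ) (F' : Matrix m n ℂ) (t : ℝ) : Prop :=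
  ∀ i j, HasDerivAt (fun s => F s i j) (F' i j) t

namespace HasMatDerivAt

variable {m n o : Type*} {F G : ℝ → Matrix m n ℂ} {F' G' : Matrix m n ℂ} {t : ℝ}

theorem matDeriv_eq (hF : HasMatDerivAt F F' t) : matDeriv F t = F' :=
  Matrix.ext fun i j => (hF i j).deriv

theorem of_differentiableAt (hF : ∀ i j, DifferentiableAt ℝ (fun s => F s i j) t) :
    HasMatDerivAt F (matDeriv F t) t :=
  fun i j => (hF i j).hasDerivAt

theorem const (M : Matrix m n ℂ) : HasMatDerivAt (fun _ => M) 0 t :=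
  fun _ _ => hasDerivAt_const t _

theorem add (hF : HasMatDerivAt F F' t) (hG : HasMatDerivAt G G' t) :
    HasMatDerivAt (fun s => F s + G s) (F' + G') t :=
  fun i j => (hF i j).add (hG i j)

theorem neg (hF : HasMatDerivAt F F' t) : HasMatDerivAt (fun s => -F s) (-F') t :=
  fun i j => (hF i j).neg

theorem const_smul (c : ℂ) (hF : HasMatDerivAt F F' t) :
    HasMatDerivAt (fun s => c • F s) (c • F') t :=
  fun i j => (hF i j).const_mul c

theorem ofReal_smul (M : Matrix m n ℂ) : HasMatDerivAt (fun s : ℝ => (s : ℂ) • M) M t := by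
  intro i j
  simpa using ((hasDerivAt_id t).ofReal_comp).mul_const (M i j)

theorem mul [Fintype n] {G : ℝ → Matrix n o ℂ} {G' : Matrix n o ℂ}
    (hF : HasMatDerivAt F F' t) (hG : HasMatDerivAt G G' t) :
    HasMatDerivAt (fun s => F s * G s) (F' * G t + F t * G') t := by
  intro i j
  simp only [Matrix.add_apply, Matrix.mul_apply, ← Finset.sum_add_distrib]
  exact HasDerivAt.fun_sum fun k _ => (hF i k).mul (hG k j)

theorem fromBlocks {l : Type*} {A : ℝ → Matrix m n ℂ} {B : ℝ → Matrix m o ℂ}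
    {C : ℝ → Matrix l n ℂ} {D : ℝ → Matrix l o ℂ} {A' : Matrix m n ℂ} {B' : Matrix m o ℂ}
    {C' : Matrix l n ℂ} {D' : Matrix l o ℂ} (hA : HasMatDerivAt A A' t)
    (hB : HasMatDerivAt B B' t) (hC : HasMatDerivAt C C' t) (hD : HasMatDerivAt D D' t) :
    HasMatDerivAt (fun s => Matrix.fromBlocks (A s) (B s) (C s) (D s))
      (Matrix.fromBlocks A' B' C' D') t := by
  rintro (i | i) (j | j)
  exacts [hA i j, hB i j, hC i j, hD i j]

end HasMatDerivAt

theorem hasMatDerivAt_Afun {Q P : ℝ → Matrix (Fin 2) (Fin 2) ℂ} {Q' P' : Matrix (Fin 2) (Fin 2) ℂ}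
    {t : ℝ} (hQ : HasMatDerivAt Q Q' t) (hP : HasMatDerivAt P P' t) (x : ℂ) :
    HasMatDerivAt (fun s => Afun Q P x s)
      (x • fromBlocks 0 Q' 0 0 + fromBlocks (-P') (Q' * Q t + Q t * Q' + 1) (-Q') P') t := by
  have hA1 := (HasMatDerivAt.fromBlocks (.const 0) hQ
    (.const (1 : Matrix (Fin 2) (Fin 2) ℂ)) (.const 0)).const_smul x
  have hA2 := HasMatDerivAt.fromBlocks hP.neg ((hQ.mul hQ).add (.ofReal_smul 1)) hQ.neg hP
  simpa [Afun, A1f, A2f] using ((HasMatDerivAt.const ((x ^ 2) • A0c)).add hA1).add hA2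

theorem A0c_sub_commutator (Q P : ℝ → Matrix (Fin 2) (Fin 2) ℂ) (x : ℂ) (t : ℝ) :
    A0c - (Afun Q P x t * Bfun Q x t - Bfun Q x t * Afun Q P x t)
      = fromBlocks (-((3 : ℂ) • (Q t * Q t) + (t : ℂ) • 1))
          (1 + (2 * x) • P t + (2 : ℂ) • (P t * Q t + Q t * P t))
          (-((2 : ℂ) • P t)) ((3 : ℂ) • (Q t * Q t) + (t : ℂ) • 1) := by
  simp only [Afun, Bfun, A0c, A1f, A2f, B1f, fromBlocks_smul, fromBlocks_add,
    fromBlocks_multiply, sub_eq_add_neg, fromBlocks_neg, fromBlocks_inj, smul_mul_assoc,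
    mul_smul_comm, Matrix.add_mul, Matrix.mul_add, Matrix.mul_zero, Matrix.zero_mul, Matrix.mul_one,
    Matrix.one_mul, Matrix.neg_mul, Matrix.mul_neg, smul_zero]
  refine ⟨?_, ?_, ?_, ?_⟩ <;> module

section Entries

variable {q1 q2 p1 p2 u : ℝ → ℂ} {t : ℝ}

theorem differentiableAt_Qf_apply (hq1 : DifferentiableAt ℝ q1 t) (hq2 : DifferentiableAt ℝ q2 t)
    (hu : DifferentiableAt ℝ u t) (hut : u t ≠ 0) (i j : Fin 2) :
    DifferentiableAt ℝ (fun s => Qf q1 q2 u s i j) t := by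
  fin_cases i <;> fin_cases j <;>
    simp only [Qf, Fin.zero_eta, Fin.mk_one, of_apply, cons_val', cons_val_zero, cons_val_one,
      cons_val_fin_one] <;>
    fun_prop (disch := assumption)

theorem differentiableAt_Pf_apply (θ : ℂ) (hq2 : DifferentiableAt ℝ q2 t)
    (hp1 : DifferentiableAt ℝ p1 t) (hp2 : DifferentiableAt ℝ p2 t)
    (hu : DifferentiableAt ℝ u t) (hut : u t ≠ 0) (i j : Fin 2) :
    DifferentiableAt ℝ (fun s => Pf p1 p2 q2 θ u s i j) t := by
  fin_cases i <;> fin_cases j <;>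
    simp only [Pf, Fin.zero_eta, Fin.mk_one, of_apply, cons_val', cons_val_zero, cons_val_one,
      cons_val_fin_one] <;>
    fun_prop (disch := assumption)

end Entries

theorem zeroCurvature_blocks_iff (Q P Q' P' : Matrix (Fin 2) (Fin 2) ℂ) (t : ℂ) :
    (∀ x : ℂ, x • fromBlocks 0 Q' 0 0 + fromBlocks (-P') (Q' * Q + Q * Q' + 1) (-Q') P'
        = fromBlocks (-((3 : ℂ) • (Q * Q) + t • 1)) (1 + (2 * x) • P + (2 : ℂ) • (P * Q + Q * P))
            (-((2 : ℂ) • P)) ((3 : ℂ) • (Q * Q) + t • 1))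
      ↔ Q' = (2 : ℂ) • P ∧ P' = (3 : ℂ) • (Q * Q) + t • 1 := by
  simp only [fromBlocks_smul, fromBlocks_add, fromBlocks_inj, smul_zero, zero_add, neg_inj]
  constructor
  · intro h
    exact ⟨(h 0).2.2.1, (h 0).2.2.2⟩
  · rintro ⟨rfl, rfl⟩ x
    refine ⟨rfl, ?_, rfl, rfl⟩
    simp only [smul_mul_assoc, mul_smul_comm]
    module

theorem lax_pair_matrix_PI
    (θi2 : ℂ)
    (α β : ℝ)
    (q1 q2 p1 p2 u : ℝ → ℂ)
    (hdiff : ∀ t ∈ Set.Ioo α β, DifferentiableAt ℝ q1 t ∧ DifferentiableAt ℝ q2 t ∧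
      DifferentiableAt ℝ p1 t ∧ DifferentiableAt ℝ p2 t ∧ DifferentiableAt ℝ u t)
    (hu : ∀ t ∈ Set.Ioo α β, u t ≠ 0)
    (Q P : ℝ → Matrix (Fin 2) (Fin 2) ℂ)
    (hQ : Q = Qf q1 q2 u) (hP : P = Pf p1 p2 q2 θi2 u) :
    -- zero curvature:  ∂A/∂t − ∂B/∂x + [A,B] = O
    (∀ t ∈ Set.Ioo α β, ∀ x : ℂ,
        matDeriv (fun s => Afun Q P x s) t
          = A0c - (Afun Q P x t * Bfun Q x t - Bfun Q x t * Afun Q P x t))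
    ↔
    -- `Q′ = 2P` and `P′ = 3Q² + t`
    ((∀ t ∈ Set.Ioo α β, matDeriv Q t = (2:ℂ) • P t) ∧
      (∀ t ∈ Set.Ioo α β,
        matDeriv P t = (3:ℂ) • (Q t * Q t) + (t : ℂ) • (1 : Matrix (Fin 2) (Fin 2) ℂ))) := by
  rw [← forall₂_and]
  refine forall₂_congr fun t ht => ?_
  obtain ⟨hq1, hq2, hp1, hp2, hud⟩ := hdiff t ht
  have hQ' : HasMatDerivAt Q (matDeriv Q t) t :=
    .of_differentiableAt (hQ ▸ differentiableAt_Qf_apply hq1 hq2 hud (hu t ht))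
  have hP' : HasMatDerivAt P (matDeriv P t) t :=
    .of_differentiableAt (hP ▸ differentiableAt_Pf_apply _ hq2 hp1 hp2 hud (hu t ht))
  simp only [(hasMatDerivAt_Afun hQ' hP' _).matDeriv_eq, A0c_sub_commutator]
  exact zeroCurvature_blocks_iff _ _ _ _ _

end
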